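/- Let G be an l-group with left Haar measure dg and W a complex vector space. The linear map C_c^∞(G, W) → W, φ ↦ ∫_G φ(g) dg, descends to a linear isomorphism from the quotient of C_c^∞(G, W) by the linear span of {L_gψ − ψ : g ∈ G, ψ ∈ C_c^∞(G, W)} onto W, where (L_gψ)(x) = ψ(g^{-1}x); that is, the coinvariant space H₀(G, C_c^∞(G, W)) for the left regular action of G (acting trivially on W) is isomorphic to W via integration. -/

import Mathlib

/-! A function `f ∈ C_c^∞(G, W)` is right-invariant under some compact open subgroup `K`, so it
is `F ∘ mk` for a finitely supported `F : G ⧸ K → W`, and its integral is `μ K • ∑ᶠ q, F q`.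
This makes integration linear and shows that its kernel is spanned by the `L_g ψ - ψ`: when
`∑ᶠ q, F q = 0`, `f` is the sum over `q` of `L_{q.out} ψ_q - ψ_q` with `ψ_q = F q • 1_K`.
Integration is onto because `∫ 1_K = μ K ≠ 0`. -/

open MeasureTheory
open scoped Pointwise

noncomputable section

/-- The space of locally constant, compactly supported `V`-valued functions on `X`,
as a `ℂ`-submodule of `X → V`.  This is `C_c^∞(X, V)`. -/
def SmCc (X : Type*) [TopologicalSpace X] (V : Type*) [AddCommGroup V] [Module ℂ V] :
    Submodule ℂ (X → V) where
  carrier := {f | IsLocallyConstant f ∧ HasCompactSupport f}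
  add_mem' := fun hf hg => ⟨hf.1.add hg.1, hf.2.add hg.2⟩
  zero_mem' := ⟨IsLocallyConstant.const 0, by
    have : Function.support (0 : X → V) = ∅ := Function.support_zero
    simp [HasCompactSupport, tsupport, this]⟩
  smul_mem' := fun c f hf => ⟨hf.1.comp (fun v => c • v), hf.2.mono
    (Function.support_const_smul_subset c f)⟩

/-- The integral of a locally constant compactly supported function against a measure:
the finite sum `∑ᵥ μ(f⁻¹{v}) • v` over the (finitely many) nonzero values of `f`. -/
def smInt {X : Type*} [MeasurableSpace X] (μ : Measure X)
    {V : Type*} [AddCommGroup V] [Module ℂ V] (f : X → V) : V :=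
  ∑ᶠ v : V, (((μ (f ⁻¹' {v})).toReal : ℝ) : ℂ) • v

/-- A representation of `G` on a complex vector space is *smooth* if every vector is fixed
by some open subgroup. -/
def SmoothRep {G : Type*} [Group G] [TopologicalSpace G] {V : Type*} [AddCommGroup V]
    [Module ℂ V] (ρ : Representation ℂ G V) : Prop :=
  ∀ v : V, ∃ U : Subgroup G, IsOpen (U : Set G) ∧ ∀ g ∈ U, ρ g v = v

/-- `G` admits a neighbourhood basis of the identity consisting of compact open subgroups
(part of the definition of an `l`-group). -/
def HasCompactOpenBasis (G : Type*) [Group G] [TopologicalSpace G] : Prop :=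
  ∀ U ∈ nhds (1 : G), ∃ K : Subgroup G, IsCompact (K : Set G) ∧ IsOpen (K : Set G) ∧
    (K : Set G) ⊆ U

/-- Pullback along a homeomorphism combined with postcomposition by a linear map, as a linear
map between spaces of locally constant compactly supported functions. -/
def ccMap {X Y : Type*} [TopologicalSpace X] [TopologicalSpace Y]
    {V W : Type*} [AddCommGroup V] [Module ℂ V] [AddCommGroup W] [Module ℂ W]
    (φ : X ≃ₜ Y) (T : V →ₗ[ℂ] W) : SmCc Y V →ₗ[ℂ] SmCc X W where
  toFun f := ⟨fun x => T (f.1 (φ x)),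
    ⟨(f.2.1.comp_continuous φ.continuous).comp T, (f.2.2.comp_homeomorph φ).comp_left T.map_zero⟩⟩
  map_add' f g := by ext x; simp
  map_smul' c f := by ext x; simp

/-- The span, inside `C_c^∞(G, W)`, of the elements `L_gψ − ψ` for the left regular action of
`G` (acting trivially on `W`). -/
def lRegCoinvSpan (G : Type*) [Group G] [TopologicalSpace G]
    (W : Type*) [AddCommGroup W] [Module ℂ W] : Submodule ℂ (SmCc G W) :=
  Submodule.span ℂ
    {f : SmCc G W | ∃ (g : G) (ψ : SmCc G W),
      (f : G → W) = (fun x => (ψ : G → W) (g⁻¹ * x)) - (ψ : G → W)}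

open Function ENNReal Finset

theorem smInt_comp_of_measure_fiber {X Q W : Type*} [MeasurableSpace X] [AddCommGroup W]
    [Module ℂ W] (μ : Measure X) {π : X → Q} (hπ : ∀ q, MeasurableSet (π ⁻¹' {q}))
    {m : ℝ≥0∞} (hm : ∀ q, μ (π ⁻¹' {q}) = m) {F : Q → W} (hF : HasFiniteSupport F) :
    smInt μ (F ∘ π) = (m.toReal : ℂ) • ∑ᶠ q, F q := by
  classical
  set s := hF.toFinset
  have hfiber : ∀ v ≠ 0, μ ((F ∘ π) ⁻¹' {v}) = #{q ∈ s | F q = v} • m := by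
    intro v hv
    have hpre : (F ∘ π) ⁻¹' {v} = ⋃ q ∈ {q ∈ s | F q = v}, π ⁻¹' {q} := by
      ext x
      simp only [Set.mem_preimage, comp_apply, Set.mem_singleton_iff, Set.mem_iUnion,
        Finset.mem_filter, exists_prop]
      exact ⟨fun h => ⟨π x, ⟨hF.mem_toFinset.mpr (mem_support.mpr (h ▸ hv)), h⟩, rfl⟩,
        fun ⟨_, ⟨_, h⟩, rfl⟩ => h⟩
    rw [hpre, measure_biUnion_finset (fun q _ q' _ hqq' => ?_) fun q _ => hπ q]
    · simp [hm]
    · exact Set.disjoint_singleton.mpr hqq' |>.preimage π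
  calc smInt μ (F ∘ π)
      = ∑ᶠ v, (m.toReal : ℂ) • (#{q ∈ s | F q = v} • v) := by
        refine finsum_congr fun v => ?_
        rcases eq_or_ne v 0 with rfl | hv
        · simp
        · rw [hfiber v hv, toReal_nsmul, nsmul_eq_mul]
          push_cast
          rw [mul_comm, mul_smul, Nat.cast_smul_eq_nsmul]
    _ = (m.toReal : ℂ) • ∑ v ∈ s.image F, #{q ∈ s | F q = v} • v := by
        rw [Finset.smul_sum]
        refine finsum_eq_sum_of_support_subset _ fun v hv => ?_
        have hcard : #{q ∈ s | F q = v} ≠ 0 := fun h => hv (by simp [h])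
        obtain ⟨q, hq⟩ := Finset.card_ne_zero.mp hcard
        rw [Finset.mem_filter] at hq
        exact Finset.mem_coe.mpr (Finset.mem_image.mpr ⟨q, hq⟩)
    _ = (m.toReal : ℂ) • ∑ᶠ q, F q := by
        rw [finsum_eq_sum F hF, Finset.sum_comp (fun v => v) F]

theorem smInt_comp_mul_left {G W : Type*} [Group G] [MeasurableSpace G] [MeasurableMul G]
    [AddCommGroup W] [Module ℂ W] (μ : Measure G) [μ.IsMulLeftInvariant] (g : G) (ψ : G → W) :
    smInt μ (fun x => ψ (g⁻¹ * x)) = smInt μ ψ :=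
  finsum_congr fun v => by rw [← measure_preimage_mul μ g⁻¹ (ψ ⁻¹' {v})]; rfl

open Topology QuotientGroup

section LocallyConstant

variable {G : Type*} [Group G] [TopologicalSpace G] [IsTopologicalGroup G]

theorem IsLocallyConstant.exists_mem_nhds_one_forall_mul_eq {α : Type*} {f : G → α}
    (hf : IsLocallyConstant f) {C : Set G} (hC : IsCompact C) :
    ∃ V ∈ 𝓝 (1 : G), ∀ x ∈ C, ∀ k ∈ V, f (x * k) = f x := by
  -- uniformity of `f` over `C` comes from the tube lemma in `G × G` around the diagonal of `C`
  let E : Set (G × G) := {p | f p.2 = f p.1}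
  have hE : IsOpen E := isOpen_iff_mem_nhds.mpr fun p hp =>
    ((hf.eventually_eq p.1).prod_nhds (hf.eventually_eq p.2)).mono fun z hz =>
      show f z.2 = f z.1 by rw [hz.1, hz.2]; exact hp
  obtain ⟨V, hV, hCV⟩ := compact_open_separated_mul_right (hC.image (continuous_id.prodMk
    continuous_id)) hE (by rintro _ ⟨x, -, rfl⟩; rfl)
  refine ⟨(fun k => ((1 : G), k)) ⁻¹' V,
    (continuous_const.prodMk continuous_id).continuousAt.preimage_mem_nhds hV,
    fun x hx k hk => ?_⟩
  simpa [E] using hCV (Set.mul_mem_mul ⟨x, hx, rfl⟩ hk)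

variable {W : Type*} [Zero W]

theorem HasCompactOpenBasis.exists_subgroup_forall_mul_eq (hG : HasCompactOpenBasis G)
    {f : G → W} (hf : IsLocallyConstant f) (hfc : HasCompactSupport f) {U : Set G}
    (hU : U ∈ 𝓝 1) :
    ∃ K : Subgroup G, IsCompact (K : Set G) ∧ IsOpen (K : Set G) ∧ (K : Set G) ⊆ U ∧
      ∀ x, ∀ k ∈ K, f (x * k) = f x := by
  obtain ⟨V, hV, hfV⟩ := hf.exists_mem_nhds_one_forall_mul_eq hfc.isCompact
  obtain ⟨K, hKc, hKo, hKUV⟩ := hG (U ∩ V) (Filter.inter_mem hU hV)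
  refine ⟨K, hKc, hKo, fun k hk => (hKUV hk).1, fun x k hk => ?_⟩
  by_cases hx : x ∈ tsupport f
  · exact hfV x hx k (hKUV hk).2
  by_cases hxk : x * k ∈ tsupport f
  · simpa using (hfV (x * k) hxk k⁻¹ (hKUV (K.inv_mem hk)).2).symm
  · rw [image_eq_zero_of_notMem_tsupport hx, image_eq_zero_of_notMem_tsupport hxk]

end LocallyConstant

namespace QuotientGroup

variable {G : Type*} [Group G]

theorem preimage_mk_eq_image_out_mul (K : Subgroup G) (s : Set (G ⧸ K)) :
    mk ⁻¹' s = (Quotient.out '' s) * K := by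
  rw [← preimage_image_mk_eq_mul, Set.image_image]
  simp

theorem measure_preimage_mk_singleton [MeasurableSpace G] [MeasurableMul G] (μ : Measure G)
    [μ.IsMulLeftInvariant] (K : Subgroup G) (q : G ⧸ K) :
    μ (mk ⁻¹' {q}) = μ K := by
  rw [preimage_mk_eq_image_out_mul, Set.image_singleton, Set.singleton_mul, Set.image_mul_left,
    measure_preimage_mul]

variable [TopologicalSpace G] [IsTopologicalGroup G] {K : Subgroup G} {W : Type*}

theorem exists_hasFiniteSupport_eq_comp_mk [Zero W] (hKo : IsOpen (K : Set G)) {f : G → W}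
    (hfc : HasCompactSupport f) (hinv : ∀ x, ∀ k ∈ K, f (x * k) = f x) :
    ∃ F : G ⧸ K → W, HasFiniteSupport F ∧ f = F ∘ mk := by
  have := discreteTopology_iff.mpr hKo
  refine ⟨fun q => f q.out, (hfc.isCompact.image continuous_mk).finite_of_discrete.subset ?_,
    funext fun x => ?_⟩
  · exact fun q hq => ⟨q.out, subset_tsupport f hq, out_eq' q⟩
  · obtain ⟨k, hk⟩ := mk_out_eq_mul K x
    simp [hk, hinv]

theorem comp_mk_mem_SmCc [AddCommGroup W] [Module ℂ W] (hKc : IsCompact (K : Set G))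
    (hKo : IsOpen (K : Set G)) {F : G ⧸ K → W} (hF : HasFiniteSupport F) :
    F ∘ mk ∈ SmCc G W := by
  have := discreteTopology_iff.mpr hKo
  refine ⟨(IsLocallyConstant.of_discrete F).comp_continuous continuous_mk,
    HasCompactSupport.intro ((hF.image Quotient.out).isCompact.mul hKc) fun x hx => ?_⟩
  rw [← preimage_mk_eq_image_out_mul] at hx
  exact notMem_support.mp hx

theorem smInt_comp_mk [MeasurableSpace G] [BorelSpace G] [AddCommGroup W] [Module ℂ W]
    (μ : Measure G) [μ.IsMulLeftInvariant] (hKo : IsOpen (K : Set G)) {F : G ⧸ K → W}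
    (hF : HasFiniteSupport F) :
    smInt μ (F ∘ mk) = ((μ K).toReal : ℂ) • ∑ᶠ q, F q := by
  have := discreteTopology_iff.mpr hKo
  exact smInt_comp_of_measure_fiber μ
    (fun q => ((isOpen_discrete {q}).preimage continuous_mk).measurableSet)
    (measure_preimage_mk_singleton μ K) hF

end QuotientGroup

theorem IsCompact.measure_toReal_ne_zero {X : Type*} [TopologicalSpace X] [MeasurableSpace X]
    {μ : Measure X} [IsFiniteMeasureOnCompacts μ] [μ.IsOpenPosMeasure] {s : Set X}
    (hsc : IsCompact s) (hso : IsOpen s) (hs : s.Nonempty) : (μ s).toReal ≠ 0 :=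
  toReal_ne_zero.mpr ⟨(hso.measure_pos μ hs).ne', hsc.measure_ne_top⟩

section Integral

variable {G : Type*} [Group G] [TopologicalSpace G] [IsTopologicalGroup G]
  {W : Type*} [AddCommGroup W] [Module ℂ W]

theorem HasCompactOpenBasis.exists_eq_comp_mk (hG : HasCompactOpenBasis G) {f : G → W}
    (hf : f ∈ SmCc G W) :
    ∃ K : Subgroup G, IsCompact (K : Set G) ∧ IsOpen (K : Set G) ∧
      ∃ F : G ⧸ K → W, HasFiniteSupport F ∧ f = F ∘ mk := by
  obtain ⟨K, hKc, hKo, -, hinv⟩ := hG.exists_subgroup_forall_mul_eq hf.1 hf.2 Filter.univ_mem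
  exact ⟨K, hKc, hKo, exists_hasFiniteSupport_eq_comp_mk hKo hf.2 hinv⟩

theorem HasCompactOpenBasis.exists_eq_comp_mk₂ (hG : HasCompactOpenBasis G) {f g : G → W}
    (hf : f ∈ SmCc G W) (hg : g ∈ SmCc G W) :
    ∃ K : Subgroup G, IsOpen (K : Set G) ∧ ∃ F F' : G ⧸ K → W,
      HasFiniteSupport F ∧ HasFiniteSupport F' ∧ f = F ∘ mk ∧ g = F' ∘ mk := by
  obtain ⟨K₁, -, hK₁o, -, hinv₁⟩ := hG.exists_subgroup_forall_mul_eq hf.1 hf.2 Filter.univ_mem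
  obtain ⟨K, -, hKo, hKK₁, hinv⟩ :=
    hG.exists_subgroup_forall_mul_eq hg.1 hg.2 (hK₁o.mem_nhds K₁.one_mem)
  obtain ⟨F, hF, rfl⟩ :=
    exists_hasFiniteSupport_eq_comp_mk hKo hf.2 fun x k hk => hinv₁ x k (hKK₁ hk)
  obtain ⟨F', hF', rfl⟩ := exists_hasFiniteSupport_eq_comp_mk hKo hg.2 hinv
  exact ⟨K, hKo, F, F', hF, hF', rfl, rfl⟩

def leftTransl (g : G) : SmCc G W →ₗ[ℂ] SmCc G W :=
  ccMap (Homeomorph.mulLeft g⁻¹) LinearMap.id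

theorem leftTransl_sub_mem_lRegCoinvSpan (g : G) (ψ : SmCc G W) :
    leftTransl g ψ - ψ ∈ lRegCoinvSpan G W :=
  Submodule.subset_span ⟨g, ψ, rfl⟩

theorem comp_mk_mem_lRegCoinvSpan {K : Subgroup G} (hKc : IsCompact (K : Set G))
    (hKo : IsOpen (K : Set G)) {F : G ⧸ K → W} (hF : HasFiniteSupport F)
    (hsum : ∑ᶠ q, F q = 0) :
    (⟨F ∘ mk, comp_mk_mem_SmCc hKc hKo hF⟩ : SmCc G W) ∈ lRegCoinvSpan G W := by
  classical
  -- `F ∘ mk = ∑ q, Pi.single q (F q) ∘ mk` is the sum of the translates by `q.out` of the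
  -- `ψ q = F q • 1_K`, whose own sum is `(∑ᶠ q, F q) • 1_K = 0`
  let ψ (q : G ⧸ K) : SmCc G W := ⟨Pi.single (mk 1) (F q) ∘ mk,
    comp_mk_mem_SmCc hKc hKo ((Set.finite_singleton _).subset Pi.support_single_subset)⟩
  suffices h : (⟨F ∘ mk, comp_mk_mem_SmCc hKc hKo hF⟩ : SmCc G W) =
      ∑ q ∈ hF.toFinset, (leftTransl q.out (ψ q) - ψ q) from
    h ▸ Submodule.sum_mem _ fun q _ => leftTransl_sub_mem_lRegCoinvSpan _ _
  have htransl (q : G ⧸ K) (x : G) :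
      (Pi.single (mk 1) (F q) : G ⧸ K → W) (mk (q.out⁻¹ * x)) =
        (Pi.single q (F q) : G ⧸ K → W) (mk x) := by
    have hmk : (mk (q.out⁻¹ * x) : G ⧸ K) = mk 1 ↔ (mk x : G ⧸ K) = q := by
      conv_rhs => rw [← out_eq' q]
      rw [QuotientGroup.eq, QuotientGroup.eq, mul_one, mul_inv_rev, inv_inv]
    simp only [Pi.single_apply, hmk]
  rw [finsum_eq_sum F hF] at hsum
  ext x
  have hψ : ∑ q ∈ hF.toFinset, (ψ q : G → W) x = 0 := by
    simp [ψ, Pi.single_apply, Finset.sum_ite_irrel, hsum]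
  have hF_eq : F (mk x) = ∑ q ∈ hF.toFinset, (Pi.single q (F q) : G ⧸ K → W) (mk x) := by
    rw [Finset.sum_pi_single]
    split_ifs with h
    · rfl
    · exact notMem_support.mp (mt hF.mem_toFinset.mpr h)
  simp only [Submodule.coe_sum, Finset.sum_apply, Submodule.coe_sub, Pi.sub_apply,
    Finset.sum_sub_distrib, hψ, sub_zero, comp_apply, hF_eq]
  exact Finset.sum_congr rfl fun q _ => (htransl q x).symm

variable [MeasurableSpace G] [BorelSpace G] (hG : HasCompactOpenBasis G) (μ : Measure G)
  [μ.IsMulLeftInvariant]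

def smIntₗ : SmCc G W →ₗ[ℂ] W where
  toFun f := smInt μ (f : G → W)
  map_add' f g := by
    obtain ⟨K, hKo, F, F', hF, hF', hf, hg⟩ := hG.exists_eq_comp_mk₂ f.2 g.2
    rw [Submodule.coe_add, hf, hg, ← Pi.add_comp, smInt_comp_mk μ hKo (hF.add hF'),
      smInt_comp_mk μ hKo hF, smInt_comp_mk μ hKo hF', ← smul_add, ← finsum_add_distrib hF hF']
    rfl
  map_smul' c f := by
    obtain ⟨K, -, hKo, F, hF, hf⟩ := hG.exists_eq_comp_mk f.2
    have hcF : HasFiniteSupport (c • F) := Set.Finite.subset hF (support_const_smul_subset c F)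
    rw [Submodule.coe_smul, hf, ← Pi.smul_comp, smInt_comp_mk μ hKo hcF, smInt_comp_mk μ hKo hF,
      RingHom.id_apply, smul_comm, smul_finsum' c hF]
    rfl

theorem smIntₗ_apply (f : SmCc G W) : smIntₗ hG μ f = smInt μ (f : G → W) :=
  rfl

theorem smIntₗ_leftTransl (g : G) (ψ : SmCc G W) : smIntₗ hG μ (leftTransl g ψ) = smIntₗ hG μ ψ :=
  smInt_comp_mul_left μ g (ψ : G → W)

theorem lRegCoinvSpan_le_ker_smIntₗ : lRegCoinvSpan G W ≤ LinearMap.ker (smIntₗ hG μ) := by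
  rw [lRegCoinvSpan, Submodule.span_le]
  rintro f ⟨g, ψ, hf⟩
  have hf' : f = leftTransl g ψ - ψ := Subtype.ext hf
  simp [hf', smIntₗ_leftTransl]

variable [IsFiniteMeasureOnCompacts μ] [μ.IsOpenPosMeasure]

theorem ker_smIntₗ_le : LinearMap.ker (smIntₗ hG μ) ≤ lRegCoinvSpan G W := by
  intro f hf
  obtain ⟨K, hKc, hKo, F, hF, hfF⟩ := hG.exists_eq_comp_mk f.2
  have hsum : ∑ᶠ q, F q = 0 := by
    rw [LinearMap.mem_ker, smIntₗ_apply, hfF, smInt_comp_mk μ hKo hF] at hf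
    exact (smul_eq_zero.mp hf).resolve_left
      (Complex.ofReal_ne_zero.mpr (hKc.measure_toReal_ne_zero hKo ⟨1, K.one_mem⟩))
  exact (Subtype.ext hfF : f = ⟨F ∘ mk, comp_mk_mem_SmCc hKc hKo hF⟩) ▸
    comp_mk_mem_lRegCoinvSpan hKc hKo hF hsum

theorem smIntₗ_surjective : Surjective (smIntₗ (W := W) hG μ) := by
  classical
  intro w
  obtain ⟨K, hKc, hKo, -⟩ := hG Set.univ Filter.univ_mem
  set c : ℂ := ((μ K).toReal : ℂ)
  have hc : c ≠ 0 := Complex.ofReal_ne_zero.mpr (hKc.measure_toReal_ne_zero hKo ⟨1, K.one_mem⟩)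
  let F : G ⧸ K → W := Pi.single (mk 1) (c⁻¹ • w)
  have hF : HasFiniteSupport F := (Set.finite_singleton _).subset Pi.support_single_subset
  refine ⟨⟨F ∘ mk, comp_mk_mem_SmCc hKc hKo hF⟩, ?_⟩
  rw [smIntₗ_apply, smInt_comp_mk μ hKo hF,
    finsum_eq_single F (mk 1) fun q hq => Pi.single_eq_of_ne hq _]
  show c • (Pi.single (mk 1 : G ⧸ K) (c⁻¹ • w) : G ⧸ K → W) (mk 1) = w
  rw [Pi.single_eq_same, smul_smul, mul_inv_cancel₀ hc, one_smul]

end Integral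

theorem coinvariants_of_regular_iso_integral_general
    (G : Type*) [Group G] [TopologicalSpace G] [IsTopologicalGroup G]
    (hG : HasCompactOpenBasis G)
    [MeasurableSpace G] [BorelSpace G] (μ : Measure G) [μ.IsHaarMeasure]
    (W : Type*) [AddCommGroup W] [Module ℂ W] :
    ∃ e : (SmCc G W ⧸ lRegCoinvSpan G W) ≃ₗ[ℂ] W,
      ∀ φ : SmCc G W, e (Submodule.Quotient.mk φ) = smInt μ (φ : G → W) := by
  have hker : LinearMap.ker (smIntₗ hG μ) = lRegCoinvSpan G W :=
    le_antisymm (ker_smIntₗ_le hG μ) (lRegCoinvSpan_le_ker_smIntₗ hG μ)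
  exact ⟨(Submodule.quotEquivOfEq _ _ hker.symm).trans
    ((smIntₗ (W := W) hG μ).quotKerEquivOfSurjective (smIntₗ_surjective hG μ)), fun φ => rfl⟩

/-- Integration against a left Haar measure descends to a linear isomorphism
`H₀(G, C_c^∞(G, W)) ≅ W` for the left regular action of `G` on `C_c^∞(G, W)`. -/
theorem coinvariants_of_regular_iso_integral
    (G : Type*) [Group G] [TopologicalSpace G] [IsTopologicalGroup G] [T2Space G]
    [LocallyCompactSpace G] [TotallyDisconnectedSpace G] [SigmaCompactSpace G]
    (hG : HasCompactOpenBasis G)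
    [MeasurableSpace G] [BorelSpace G] (μ : Measure G) [μ.IsHaarMeasure]
    (W : Type*) [AddCommGroup W] [Module ℂ W] :
    ∃ e : (SmCc G W ⧸ lRegCoinvSpan G W) ≃ₗ[ℂ] W,
      ∀ φ : SmCc G W, e (Submodule.Quotient.mk φ) = smInt μ (φ : G → W) :=
  coinvariants_of_regular_iso_integral_general G hG μ W
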